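/- There exists M ∈ ℕ such that for all m ≥ M the following holds. Let (ũ_ij)_{i≠j, i,j∈[m]} be i.i.d. uniform on [0,1]; let B̃ ∈ ℝ^{m×m} be the random matrix with B̃_ii = 1 and B̃_ij = ũ_ij/√m for i ≠ j, and let B ∈ ℝ^{m×m} be the deterministic matrix with B_ii = 1 and B_ij = 1/√m for i ≠ j. Then with probability at least 1 − 1/m, every w ∈ ℝ^m with w ≥ 0 and B̃ᵀw ≤ e (componentwise, e the all-ones vector) satisfies Bᵀw ≤ 5·e; that is, the dualized uncertainty set W̃ = {w ≥ 0 : B̃ᵀw ≤ e} is contained in 5·W where W = {w ≥ 0 : Bᵀw ≤ e}. -/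

import Mathlib

/-!
Write `B̃ = 1 + m^{-1/2} U` with `U` the off-diagonal part of `B̃ √m`. If every row sum of `U` is
at least `a > 0`, summing the constraints `(B̃ᵀw)_j ≤ 1` over `j` gives `a ∑ w ≤ m √m`, while each
`w_j ≤ 1`; hence `(Bᵀw)_j ≤ w_j + m^{-1/2} ∑ w ≤ 1 + m / a`, which is at most `5` for
`a = 3 (m - 1) / 10`. By Hoeffding's inequality a row sum of `m - 1` independent uniforms falls
below `3 (m - 1) / 10` with probability at most `exp (-2 (m - 1) / 25)`, so a union bound over the
`m` rows leaves failure probability at most `m exp (-2 (m - 1) / 25) ≤ 1 / m` for large `m`.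
-/

open Matrix MeasureTheory ProbabilityTheory

/-- The worst-case recourse matrix: `B_ii = 1`, `B_ij = 1/√m` for `i ≠ j`. -/
noncomputable def badB (m : ℕ) : Matrix (Fin m) (Fin m) ℝ :=
  Matrix.of fun i j => if i = j then (1 : ℝ) else 1 / Real.sqrt m

/-- The random perturbed worst-case matrix: `B̃_ii = 1`, `B̃_ij = ũ_ij/√m` for `i ≠ j`. -/
noncomputable def badBrand (m : ℕ) {Ω : Type} (u : Fin m → Fin m → Ω → ℝ) (ω : Ω) :
    Matrix (Fin m) (Fin m) ℝ :=
  Matrix.of fun i j => if i = j then (1 : ℝ) else u i j ω / Real.sqrt m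

open Finset Real Filter

section DualSet

variable {n : Type*} [Fintype n] [DecidableEq n] {U V : Matrix n n ℝ} {s a : ℝ} {w : n → ℝ}

lemma one_add_smul_transpose_mulVec_apply (U : Matrix n n ℝ) (s : ℝ) (w : n → ℝ) (j : n) :
    ((1 + s • U)ᵀ *ᵥ w) j = w j + s * ∑ i, U i j * w i := by
  simp only [mulVec, dotProduct, transpose_apply, Matrix.add_apply, Matrix.smul_apply,
    smul_eq_mul, add_mul, sum_add_distrib, one_apply, ite_mul, one_mul, zero_mul, sum_ite_eq',
    mem_univ, if_true, mul_sum, mul_assoc]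

lemma le_one_of_one_add_smul_transpose_mulVec_le (hU : ∀ i j, 0 ≤ U i j) (hs : 0 ≤ s)
    (hw : 0 ≤ w) (h : (1 + s • U)ᵀ *ᵥ w ≤ 1) (j : n) : w j ≤ 1 := by
  have hj := h j
  rw [one_add_smul_transpose_mulVec_apply] at hj
  have : 0 ≤ s * ∑ i, U i j * w i :=
    mul_nonneg hs (sum_nonneg fun i _ => mul_nonneg (hU i j) (hw i))
  simp only [Pi.one_apply] at hj
  linarith

lemma mul_sum_le_of_one_add_smul_transpose_mulVec_le (hrow : ∀ i, a ≤ ∑ j, U i j) (hs : 0 < s)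
    (hw : 0 ≤ w) (h : (1 + s⁻¹ • U)ᵀ *ᵥ w ≤ 1) : a * ∑ i, w i ≤ Fintype.card n * s := by
  have hsum : ∑ i, w i + s⁻¹ * ∑ i, (∑ j, U i j) * w i ≤ Fintype.card n := by
    have hswap : ∑ j, ∑ i, U i j * w i = ∑ i, (∑ j, U i j) * w i := by
      rw [sum_comm]; simp only [sum_mul]
    have := sum_le_sum fun j (_ : j ∈ univ) => h j
    simp only [one_add_smul_transpose_mulVec_apply, Pi.one_apply, sum_add_distrib,
      ← mul_sum, sum_const, card_univ, nsmul_eq_mul, mul_one] at this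
    rwa [hswap] at this
  have hweighted : a * ∑ i, w i ≤ ∑ i, (∑ j, U i j) * w i := by
    rw [mul_sum]
    exact sum_le_sum fun i _ => mul_le_mul_of_nonneg_right (hrow i) (hw i)
  have hmass : 0 ≤ ∑ i, w i := sum_nonneg fun i _ => hw i
  have := (inv_mul_le_iff₀ hs).1 (by linarith : s⁻¹ * ∑ i, (∑ j, U i j) * w i ≤ Fintype.card n)
  linarith

lemma one_add_smul_transpose_mulVec_apply_le (hU : ∀ i j, 0 ≤ U i j) (hrow : ∀ i, a ≤ ∑ j, U i j)
    (ha : 0 < a) (hV : ∀ i j, V i j ≤ 1) (hs : 0 < s) (hw : 0 ≤ w)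
    (h : (1 + s⁻¹ • U)ᵀ *ᵥ w ≤ 1) (j : n) :
    ((1 + s⁻¹ • V)ᵀ *ᵥ w) j ≤ 1 + Fintype.card n / a := by
  have hwj := le_one_of_one_add_smul_transpose_mulVec_le hU (inv_nonneg.2 hs.le) hw h j
  have hmass : ∑ i, w i ≤ Fintype.card n * s / a := by
    rw [le_div_iff₀' ha]
    exact mul_sum_le_of_one_add_smul_transpose_mulVec_le hrow hs hw h
  have hVw : ∑ i, V i j * w i ≤ ∑ i, w i :=
    sum_le_sum fun i _ => mul_le_of_le_one_left (hw i) (hV i j)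
  calc ((1 + s⁻¹ • V)ᵀ *ᵥ w) j = w j + s⁻¹ * ∑ i, V i j * w i :=
        one_add_smul_transpose_mulVec_apply V s⁻¹ w j
    _ ≤ 1 + s⁻¹ * (Fintype.card n * s / a) := by gcongr; exact hVw.trans hmass
    _ = 1 + Fintype.card n / a := by field_simp

def offDiagonal (v : n → n → ℝ) : Matrix n n ℝ :=
  of fun i j => if i = j then 0 else v i j

lemma sum_offDiagonal_apply (v : n → n → ℝ) (i : n) :
    ∑ j, offDiagonal v i j = ∑ j ∈ univ.erase i, v i j := by
  simp only [offDiagonal, of_apply]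
  rw [sum_ite, sum_const_zero, zero_add, filter_ne]

end DualSet

lemma badBrand_eq_one_add_smul_offDiagonal (m : ℕ) {Ω : Type} (u : Fin m → Fin m → Ω → ℝ)
    (ω : Ω) : badBrand m u ω = 1 + (√m)⁻¹ • offDiagonal fun i j => u i j ω := by
  ext i j
  by_cases hij : i = j <;> simp [badBrand, offDiagonal, one_apply, hij, div_eq_inv_mul]

lemma badB_eq_one_add_smul_offDiagonal (m : ℕ) :
    badB m = 1 + (√m)⁻¹ • offDiagonal fun _ _ => 1 := by
  ext i j
  by_cases hij : i = j <;> simp [badB, offDiagonal, one_apply, hij]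

lemma badB_transpose_mulVec_le_five {m : ℕ} (hm : 6 ≤ m) {Ω : Type} {u : Fin m → Fin m → Ω → ℝ}
    {ω : Ω} (hu : ∀ i j, i ≠ j → 0 ≤ u i j ω)
    (hrow : ∀ i, 3 / 10 * ((m : ℝ) - 1) ≤ ∑ j ∈ univ.erase i, u i j ω) {w : Fin m → ℝ}
    (hw : 0 ≤ w) (h : (badBrand m u ω)ᵀ *ᵥ w ≤ 1) : (badB m)ᵀ *ᵥ w ≤ fun _ => 5 := by
  have hm' : (6 : ℝ) ≤ m := by exact_mod_cast hm
  intro j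
  rw [badBrand_eq_one_add_smul_offDiagonal] at h
  rw [badB_eq_one_add_smul_offDiagonal]
  refine (one_add_smul_transpose_mulVec_apply_le (a := 3 / 10 * ((m : ℝ) - 1)) ?_ ?_
    (by linarith) ?_ (sqrt_pos.2 (by linarith)) hw h j).trans ?_
  · intro i j
    by_cases hij : i = j <;> simp [offDiagonal, hij, hu i j]
  · intro i
    rw [sum_offDiagonal_apply]
    exact hrow i
  · intro i j
    by_cases hij : i = j <;> simp [offDiagonal, hij]
  · rw [Fintype.card_fin, ← le_sub_iff_add_le', div_le_iff₀ (by linarith)]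
    linarith

section Probability

variable {Ω : Type*} [MeasurableSpace Ω] {μ : Measure Ω}

lemma ae_mem_Icc_of_map_eq {f : Ω → ℝ} (hf : AEMeasurable f μ)
    (hmap : μ.map f = volume.restrict (Set.Icc 0 1)) : ∀ᵐ ω ∂μ, f ω ∈ Set.Icc (0 : ℝ) 1 :=
  (ae_map_iff hf measurableSet_Icc).1 (hmap ▸ ae_restrict_mem measurableSet_Icc)

lemma integral_eq_half_of_map_eq {f : Ω → ℝ} (hf : AEMeasurable f μ)
    (hmap : μ.map f = volume.restrict (Set.Icc 0 1)) : μ[f] = 1 / 2 := by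
  calc μ[f] = ∫ x, x ∂(μ.map f) := (integral_map hf aestronglyMeasurable_id).symm
    _ = 1 / 2 := by
      rw [hmap, integral_Icc_eq_integral_Ioc, ← intervalIntegral.integral_of_le zero_le_one,
        integral_id]
      norm_num

lemma measureReal_sum_le_sub_mul_card_le [IsProbabilityMeasure μ] {ι : Type*} {X : ι → Ω → ℝ}
    (hind : iIndepFun X μ) (hmeas : ∀ i, AEMeasurable (X i) μ)
    (h01 : ∀ i, ∀ᵐ ω ∂μ, X i ω ∈ Set.Icc (0 : ℝ) 1) {p : ℝ} (hmean : ∀ i, μ[X i] = p)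
    (s : Finset ι) {t : ℝ} (ht : 0 ≤ t) :
    μ.real {ω | ∑ i ∈ s, X i ω ≤ (p - t) * #s} ≤ exp (-2 * t ^ 2 * #s) := by
  have hsubG : ∀ i ∈ s, HasSubgaussianMGF (fun ω => p - X i ω) (1 / 4) μ := by
    intro i _
    have h := hasSubgaussianMGF_of_mem_Icc (X := fun ω => -X i ω) (a := -1) (b := 0) (hmeas i).neg
      (by filter_upwards [h01 i] with ω hω using ⟨by linarith [hω.2], by linarith [hω.1]⟩)
    convert h using 2 with ω
    · rw [integral_neg, hmean i]; ring
    · norm_num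
  have hindc : iIndepFun (fun i ω => p - X i ω) μ :=
    hind.comp (fun _ x => p - x) fun _ => by fun_prop
  calc μ.real {ω | ∑ i ∈ s, X i ω ≤ (p - t) * #s}
      ≤ μ.real {ω | t * #s ≤ ∑ i ∈ s, (p - X i ω)} := by
        refine measureReal_mono (fun ω hω => ?_)
        simp only [Set.mem_ofPred_eq, sum_sub_distrib, sum_const, nsmul_eq_mul] at hω ⊢
        linarith
    _ ≤ exp (-(t * #s) ^ 2 / (2 * ∑ i ∈ s, ((1 / 4 : NNReal) : ℝ))) := by
        simpa using HasSubgaussianMGF.measure_sum_ge_le_of_iIndepFun hindc hsubG (by positivity)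
    _ = exp (-2 * t ^ 2 * #s) := by
        rcases (#s).eq_zero_or_pos with hs | hs
        · simp [hs]
        · congr 1; simp only [sum_const, nsmul_eq_mul]; push_cast; field_simp; ring

lemma ofReal_one_sub_le_of_measure_compl_le [IsProbabilityMeasure μ] {S : Set Ω} {ε : ℝ}
    (hε : 0 ≤ ε) (h : μ Sᶜ ≤ ENNReal.ofReal ε) : ENNReal.ofReal (1 - ε) ≤ μ S :=
  calc ENNReal.ofReal (1 - ε) = 1 - ENNReal.ofReal ε := by
        rw [ENNReal.ofReal_sub _ hε, ENNReal.ofReal_one]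
    _ ≤ 1 - μ Sᶜ := tsub_le_tsub_left h 1
    _ ≤ μ S := tsub_le_iff_right.2 (by simpa using measure_univ_le_add_compl (μ := μ) S)

end Probability

section RandomMatrix

variable {m : ℕ} {Ω : Type} [MeasurableSpace Ω] {Pr : Measure Ω} {u : Fin m → Fin m → Ω → ℝ}

lemma ae_forall_ne_nonneg (hmeas : ∀ i j, i ≠ j → Measurable (u i j))
    (hmap : ∀ i j, i ≠ j → Measure.map (u i j) Pr = volume.restrict (Set.Icc (0 : ℝ) 1)) :
    ∀ᵐ ω ∂Pr, ∀ i j, i ≠ j → 0 ≤ u i j ω := by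
  refine ae_all_iff.2 fun i => ae_all_iff.2 fun j => ?_
  by_cases hij : i = j
  · exact ae_of_all _ fun _ h => absurd hij h
  · filter_upwards [ae_mem_Icc_of_map_eq (hmeas i j hij).aemeasurable (hmap i j hij)]
      with ω hω _ using hω.1

variable [IsProbabilityMeasure Pr]

lemma measureReal_row_sum_le_le_exp (hmeas : ∀ i j, i ≠ j → Measurable (u i j))
    (hind : iIndepFun (fun p : {p : Fin m × Fin m // p.1 ≠ p.2} => u p.1.1 p.1.2) Pr)
    (hmap : ∀ i j, i ≠ j → Measure.map (u i j) Pr = volume.restrict (Set.Icc (0 : ℝ) 1))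
    (i : Fin m) :
    Pr.real {ω | ∑ j ∈ univ.erase i, u i j ω ≤ 3 / 10 * ((m : ℝ) - 1)} ≤
      exp (-(2 / 25) * ((m : ℝ) - 1)) := by
  let toPair : {j // j ≠ i} → {p : Fin m × Fin m // p.1 ≠ p.2} := fun j => ⟨(i, j), j.2.symm⟩
  have htoPair : Function.Injective toPair := fun j k hjk => Subtype.ext (congrArg (·.1.2) hjk)
  have hcard : (#(univ : Finset {j // j ≠ i}) : ℝ) = m - 1 := by
    simp [Nat.cast_sub i.pos]
  have hsum : ∀ ω, ∑ j : {j // j ≠ i}, u i j ω = ∑ j ∈ univ.erase i, u i j ω := fun ω =>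
    (sum_subtype (univ.erase i) (fun j => by simp) (u i · ω)).symm
  have hindRow : iIndepFun (fun j : {j // j ≠ i} => u i j) Pr := hind.precomp htoPair
  have := measureReal_sum_le_sub_mul_card_le hindRow
    (fun j => (hmeas i j j.2.symm).aemeasurable)
    (fun j => ae_mem_Icc_of_map_eq (hmeas i j j.2.symm).aemeasurable (hmap i j j.2.symm))
    (fun j => integral_eq_half_of_map_eq (hmeas i j j.2.symm).aemeasurable (hmap i j j.2.symm))
    univ (t := 1 / 5) (by norm_num)
  simp only [hsum, hcard] at this
  convert this using 3 <;> norm_num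

lemma measure_iUnion_row_sum_le_le (hmeas : ∀ i j, i ≠ j → Measurable (u i j))
    (hind : iIndepFun (fun p : {p : Fin m × Fin m // p.1 ≠ p.2} => u p.1.1 p.1.2) Pr)
    (hmap : ∀ i j, i ≠ j → Measure.map (u i j) Pr = volume.restrict (Set.Icc (0 : ℝ) 1)) :
    Pr (⋃ i, {ω | ∑ j ∈ univ.erase i, u i j ω ≤ 3 / 10 * ((m : ℝ) - 1)}) ≤
      ENNReal.ofReal (m * exp (-(2 / 25) * ((m : ℝ) - 1))) :=
  calc Pr (⋃ i, {ω | ∑ j ∈ univ.erase i, u i j ω ≤ 3 / 10 * ((m : ℝ) - 1)})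
      ≤ ∑ i, Pr {ω | ∑ j ∈ univ.erase i, u i j ω ≤ 3 / 10 * ((m : ℝ) - 1)} :=
        measure_iUnion_fintype_le _ _
    _ ≤ ∑ _i : Fin m, ENNReal.ofReal (exp (-(2 / 25) * ((m : ℝ) - 1))) :=
        sum_le_sum fun i _ => by
          rw [← ofReal_measureReal]
          exact ENNReal.ofReal_le_ofReal (measureReal_row_sum_le_le_exp hmeas hind hmap i)
    _ = ENNReal.ofReal (m * exp (-(2 / 25) * ((m : ℝ) - 1))) := by
        rw [ENNReal.ofReal_mul (Nat.cast_nonneg m), ENNReal.ofReal_natCast, sum_const, card_univ,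
          Fintype.card_fin, nsmul_eq_mul]

end RandomMatrix

lemma eventually_sq_mul_exp_neg_le_one {c : ℝ} (hc : 0 < c) :
    ∀ᶠ m : ℕ in atTop, (m : ℝ) ^ 2 * exp (-c * (m - 1)) ≤ 1 := by
  have hr : |exp (-c)| < 1 := by rw [abs_of_pos (exp_pos _)]; exact exp_lt_one_iff.2 (by linarith)
  have hlim := (tendsto_pow_const_mul_const_pow_of_abs_lt_one 2 hr).const_mul (exp c)
  rw [mul_zero] at hlim
  filter_upwards [hlim.eventually (ge_mem_nhds zero_lt_one)] with m hm
  calc (m : ℝ) ^ 2 * exp (-c * (m - 1)) = exp c * ((m : ℝ) ^ 2 * exp (-c) ^ m) := by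
        rw [← exp_nat_mul, mul_left_comm, ← exp_add]
        ring_nf
    _ ≤ 1 := hm

/-- For all sufficiently large `m`, with probability at least `1 - 1/m`,
the dualized uncertainty set `W̃ = {w ≥ 0 : B̃ᵀw ≤ e}` of the randomly perturbed
worst-case instance is contained in `5·W` where `W = {w ≥ 0 : Bᵀw ≤ e}`. -/
theorem random_dual_set_in_scaled_dual_set :
    ∃ M : ℕ, ∀ m : ℕ, M ≤ m →
      ∀ (Ω : Type) [MeasurableSpace Ω] (Pr : Measure Ω) [IsProbabilityMeasure Pr]
        (u : Fin m → Fin m → Ω → ℝ),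
        (∀ i j, i ≠ j → Measurable (u i j)) →
        iIndepFun
          (fun p : {p : Fin m × Fin m // p.1 ≠ p.2} => u p.1.1 p.1.2) Pr →
        (∀ i j, i ≠ j → Measure.map (u i j) Pr = volume.restrict (Set.Icc (0 : ℝ) 1)) →
        ENNReal.ofReal (1 - 1 / m) ≤
          Pr {ω | ∀ w : Fin m → ℝ, 0 ≤ w →
              (badBrand m u ω)ᵀ *ᵥ w ≤ (fun _ => (1 : ℝ)) →
              (badB m)ᵀ *ᵥ w ≤ (fun _ => (5 : ℝ))} := by
  obtain ⟨M, hM⟩ := eventually_atTop.1 ((eventually_ge_atTop 6).and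
    (eventually_sq_mul_exp_neg_le_one (c := 2 / 25) (by norm_num)))
  refine ⟨M, fun m hm Ω _ Pr _ u hmeas hind hmap => ?_⟩
  obtain ⟨hm6, hdecay⟩ := hM m hm
  refine ofReal_one_sub_le_of_measure_compl_le (by positivity) ((measure_mono_ae ?_).trans
    ((measure_iUnion_row_sum_le_le hmeas hind hmap).trans (ENNReal.ofReal_le_ofReal ?_)))
  · filter_upwards [ae_forall_ne_nonneg hmeas hmap] with ω hω hbad
    obtain ⟨i, hi⟩ : ∃ i, ∑ j ∈ univ.erase i, u i j ω ≤ 3 / 10 * ((m : ℝ) - 1) := by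
      by_contra! hrows
      exact hbad fun w hw h => badB_transpose_mulVec_le_five hm6 hω (fun i => (hrows i).le) hw h
    exact Set.mem_iUnion.2 ⟨i, hi⟩
  · rw [le_div_iff₀ (by positivity)]
    linarith
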